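/- arXiv:1706.02620 — 2 statements merged into one kernel-verified Lean document; each statement's English description precedes it below -/
import Mathlib

section
/- Let s > 1 and let w be a weight. Then w ∈ A_1 ∩ RH_s if and only if w^s ∈ A_1. -/
open MeasureTheory ENNReal
open scoped Classical

noncomputable section

variable {n : ℕ}

/-- An axis-parallel half-open cube in `ℝⁿ`. -/
def IsCube (Q : Set (Fin n → ℝ)) : Prop :=
  ∃ (a : Fin n → ℝ) (l : ℝ), 0 < l ∧ Q = {x | ∀ i, a i ≤ x i ∧ x i < a i + l}

/-- The average `⨍_Q f` of an `ℝ≥0∞`-valued function over a set, w.r.t. Lebesgue measure. -/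
def eavg (Q : Set (Fin n → ℝ)) (f : (Fin n → ℝ) → ℝ≥0∞) : ℝ≥0∞ :=
  (∫⁻ x in Q, f x) / volume Q

/-- A weight: measurable, a.e. positive and finite, and locally integrable. -/
def IsWeight (w : (Fin n → ℝ) → ℝ≥0∞) : Prop :=
  Measurable w ∧ (∀ᵐ x ∂(volume : Measure (Fin n → ℝ)), 0 < w x ∧ w x < ∞) ∧
    ∀ Q : Set (Fin n → ℝ), IsCube Q → ∫⁻ x in Q, w x < ∞

/-- The Muckenhoupt `A_p` constant, `1 ≤ p < ∞` (ess-sup form when `p = 1`). -/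
def ApConst (p : ℝ) (w : (Fin n → ℝ) → ℝ≥0∞) : ℝ≥0∞ :=
  if p = 1 then
    ⨆ (Q : Set (Fin n → ℝ)) (_ : IsCube Q),
      essSup (fun x => eavg Q w / w x) (volume.restrict Q)
  else
    ⨆ (Q : Set (Fin n → ℝ)) (_ : IsCube Q),
      eavg Q w * (eavg Q fun x => w x ^ (1 - p / (p - 1))) ^ (p - 1)

/-- Membership in the Muckenhoupt class `A_p`. -/
def MemAp (p : ℝ) (w : (Fin n → ℝ) → ℝ≥0∞) : Prop := ApConst p w < ∞

/-- The reverse Hölder `RH_s` constant. -/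
def RHConst (s : ℝ) (w : (Fin n → ℝ) → ℝ≥0∞) : ℝ≥0∞ :=
  ⨆ (Q : Set (Fin n → ℝ)) (_ : IsCube Q),
    (eavg Q fun x => w x ^ s) ^ (1 / s) / eavg Q w

/-- Membership in the reverse Hölder class `RH_s`. -/
def MemRH (s : ℝ) (w : (Fin n → ℝ) → ℝ≥0∞) : Prop := RHConst s w < ∞

/-- The `RH_∞` constant. -/
def RHInfConst (w : (Fin n → ℝ) → ℝ≥0∞) : ℝ≥0∞ :=
  ⨆ (Q : Set (Fin n → ℝ)) (_ : IsCube Q),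
    essSup (fun x => w x / eavg Q w) (volume.restrict Q)

/-- Membership in `RH_∞`. -/
def MemRHInf (w : (Fin n → ℝ) → ℝ≥0∞) : Prop := RHInfConst w < ∞

/-- The Hardy–Littlewood maximal operator (over all cubes containing `x`). -/
def maximal (f : (Fin n → ℝ) → ℝ) (x : Fin n → ℝ) : ℝ≥0∞ :=
  ⨆ (Q : Set (Fin n → ℝ)) (_ : IsCube Q) (_ : x ∈ Q),
    eavg Q fun y => ENNReal.ofReal |f y|

/-- The Hardy–Littlewood maximal operator acting on `ℝ≥0∞`-valued functions. -/
def emaximal (f : (Fin n → ℝ) → ℝ≥0∞) (x : Fin n → ℝ) : ℝ≥0∞ :=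
  ⨆ (Q : Set (Fin n → ℝ)) (_ : IsCube Q) (_ : x ∈ Q), eavg Q f

/-- The norm `‖f‖_{L^p(w)} = (∫ f^p w dx)^(1/p)`. -/
def wLpNorm (p : ℝ) (w f : (Fin n → ℝ) → ℝ≥0∞) : ℝ≥0∞ :=
  (∫⁻ x, f x ^ p * w x) ^ (1 / p)

/-! If `w ∈ A_1 ∩ RH_s`, then on every cube `Q` and for a.e. `x ∈ Q`,
`⨍_Q w^s ≤ ([w]_{RH_s} ⨍_Q w)^s ≤ ([w]_{RH_s} [w]_{A_1} w(x))^s`.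
Conversely, `w^s ∈ A_1` gives `(⨍_Q w^s)^{1/s} ≤ [w^s]_{A_1}^{1/s} w(x)` for a.e. `x ∈ Q`;
Jensen's inequality `⨍_Q w ≤ (⨍_Q w^s)^{1/s}` turns this into `w ∈ A_1`, and averaging it
over `Q` gives `w ∈ RH_s`. -/

theorem laverage_le_laverage_rpow_rpow {α : Type*} [MeasurableSpace α] {μ : Measure α}
    [IsFiniteMeasure μ] [NeZero μ] {f : α → ℝ≥0∞} (hf : AEMeasurable f μ) {s : ℝ}
    (hs : 1 ≤ s) : ⨍⁻ x, f x ∂μ ≤ (⨍⁻ x, f x ^ s ∂μ) ^ (1 / s) := by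
  simpa [eLpNorm', laverage_eq'] using
    eLpNorm'_le_eLpNorm'_of_exponent_le one_pos hs ((μ Set.univ)⁻¹ • μ)
      (hf.smul_measure _).aestronglyMeasurable

theorem eavg_eq_setLAverage (Q : Set (Fin n → ℝ)) (f : (Fin n → ℝ) → ℝ≥0∞) :
    eavg Q f = ⨍⁻ x in Q, f x ∂volume :=
  (setLAverage_eq volume f Q).symm

namespace IsCube

variable {Q : Set (Fin n → ℝ)}

theorem eq_pi (hQ : IsCube Q) :
    ∃ (a : Fin n → ℝ) (l : ℝ), 0 < l ∧ Q = Set.univ.pi fun i => Set.Ico (a i) (a i + l) := by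
  obtain ⟨a, l, hl, rfl⟩ := hQ
  exact ⟨a, l, hl, by ext x; simp [Set.mem_pi]⟩

theorem volume_ne_zero (hQ : IsCube Q) : volume Q ≠ 0 := by
  obtain ⟨a, l, hl, rfl⟩ := hQ.eq_pi
  simp [Real.volume_pi_Ico, hl]

theorem volume_ne_top (hQ : IsCube Q) : volume Q ≠ ∞ := by
  obtain ⟨a, l, hl, rfl⟩ := hQ.eq_pi
  simp [Real.volume_pi_Ico]

theorem eavg_le_eavg_rpow_rpow (hQ : IsCube Q) {f : (Fin n → ℝ) → ℝ≥0∞}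
    (hf : AEMeasurable f (volume.restrict Q)) {s : ℝ} (hs : 1 ≤ s) :
    eavg Q f ≤ (eavg Q fun x => f x ^ s) ^ (1 / s) := by
  have : IsFiniteMeasure (volume.restrict Q) := isFiniteMeasure_restrict.2 hQ.volume_ne_top
  have : NeZero (volume.restrict Q) := ⟨by simpa using hQ.volume_ne_zero⟩
  simpa only [eavg_eq_setLAverage] using laverage_le_laverage_rpow_rpow hf hs

theorem le_mul_eavg_of_ae_le (hQ : IsCube Q) {f : (Fin n → ℝ) → ℝ≥0∞} (hf : Measurable f)
    {a c : ℝ≥0∞} (h : ∀ᵐ x ∂volume.restrict Q, a ≤ c * f x) : a ≤ c * eavg Q f :=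
  calc a = eavg Q fun _ => a := by
        rw [eavg_eq_setLAverage, setLAverage_const hQ.volume_ne_zero hQ.volume_ne_top]
    _ ≤ eavg Q fun x => c * f x := by
        simp only [eavg_eq_setLAverage]
        exact laverage_mono_ae h
    _ = c * eavg Q f := by rw [eavg, eavg, lintegral_const_mul c hf, mul_div_assoc]

end IsCube

namespace IsWeight

variable {w : (Fin n → ℝ) → ℝ≥0∞} {Q : Set (Fin n → ℝ)}

theorem setLIntegral_ne_zero (hw : IsWeight w) (hQ : IsCube Q) : ∫⁻ x in Q, w x ≠ 0 := by
  rw [Ne, lintegral_eq_zero_iff hw.1]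
  intro hzero
  have : ∀ᵐ x ∂volume.restrict Q, False := by
    filter_upwards [hzero, ae_restrict_of_ae hw.2.1] with x hx hpos
    exact hpos.1.ne' hx
  exact hQ.volume_ne_zero (by simpa using this)

theorem eavg_ne_zero (hw : IsWeight w) (hQ : IsCube Q) : eavg Q w ≠ 0 :=
  ENNReal.div_ne_zero.2 ⟨hw.setLIntegral_ne_zero hQ, hQ.volume_ne_top⟩

theorem eavg_ne_top (hw : IsWeight w) (hQ : IsCube Q) : eavg Q w ≠ ∞ :=
  ENNReal.div_ne_top (hw.2.2 Q hQ).ne hQ.volume_ne_zero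

theorem ae_rpow_pos_lt_top (hw : IsWeight w) {s : ℝ} (hs : 0 < s) :
    ∀ᵐ x ∂(volume : Measure (Fin n → ℝ)), 0 < w x ^ s ∧ w x ^ s < ∞ :=
  hw.2.1.mono fun _ hx =>
    ⟨ENNReal.rpow_pos hx.1 hx.2.ne, ENNReal.rpow_lt_top_of_nonneg hs.le hx.2.ne⟩

end IsWeight

variable {w : (Fin n → ℝ) → ℝ≥0∞} {s : ℝ}

theorem apConst_one_le_iff (hw : ∀ᵐ x ∂(volume : Measure (Fin n → ℝ)), 0 < w x ∧ w x < ∞)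
    {C : ℝ≥0∞} :
    ApConst 1 w ≤ C ↔ ∀ Q, IsCube Q → ∀ᵐ x ∂volume.restrict Q, eavg Q w ≤ C * w x := by
  simp only [ApConst, if_pos, iSup₂_le_iff]
  refine forall₂_congr fun Q _ => ⟨fun h => ?_, fun h => essSup_le_of_ae_le _ ?_⟩
  · filter_upwards [ae_le_essSup (fun x => eavg Q w / w x), ae_restrict_of_ae hw] with x hx hwx
    exact (ENNReal.div_le_iff hwx.1.ne' hwx.2.ne).1 (hx.trans h)
  · filter_upwards [h, ae_restrict_of_ae hw] with x hx hwx
    exact (ENNReal.div_le_iff hwx.1.ne' hwx.2.ne).2 hx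

theorem rhConst_le_iff (hw : IsWeight w) {C : ℝ≥0∞} :
    RHConst s w ≤ C ↔
      ∀ Q, IsCube Q → (eavg Q fun x => w x ^ s) ^ (1 / s) ≤ C * eavg Q w := by
  simp only [RHConst, iSup₂_le_iff]
  exact forall₂_congr fun Q hQ => ENNReal.div_le_iff (hw.eavg_ne_zero hQ) (hw.eavg_ne_top hQ)

theorem apConst_one_rpow_le (hs : 0 < s) (hw : IsWeight w) :
    ApConst 1 (fun x => w x ^ s) ≤ (ApConst 1 w * RHConst s w) ^ s := by
  refine (apConst_one_le_iff (hw.ae_rpow_pos_lt_top hs)).2 fun Q hQ => ?_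
  have hRH := (rhConst_le_iff (s := s) hw).1 le_rfl Q hQ
  filter_upwards [(apConst_one_le_iff hw.2.1).1 le_rfl Q hQ] with x hA
  calc eavg Q (fun x => w x ^ s) = ((eavg Q fun x => w x ^ s) ^ (1 / s)) ^ s := by
        rw [← ENNReal.rpow_mul, one_div_mul_cancel hs.ne', ENNReal.rpow_one]
    _ ≤ (RHConst s w * eavg Q w) ^ s := by gcongr
    _ ≤ (RHConst s w * (ApConst 1 w * w x)) ^ s := by gcongr
    _ = (ApConst 1 w * RHConst s w) ^ s * w x ^ s := by
        rw [← ENNReal.mul_rpow_of_nonneg _ _ hs.le, mul_left_comm, mul_assoc]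

theorem ae_eavg_rpow_rpow_le (hs : 0 < s) (hw : IsWeight w) {Q : Set (Fin n → ℝ)}
    (hQ : IsCube Q) : ∀ᵐ x ∂volume.restrict Q,
      (eavg Q fun y => w y ^ s) ^ (1 / s) ≤ ApConst 1 (fun y => w y ^ s) ^ (1 / s) * w x := by
  filter_upwards [(apConst_one_le_iff (hw.ae_rpow_pos_lt_top hs)).1 le_rfl Q hQ] with x hx
  calc _ ≤ (ApConst 1 (fun y => w y ^ s) * w x ^ s) ^ (1 / s) := by gcongr
    _ = _ := by
        rw [ENNReal.mul_rpow_of_nonneg _ _ (by positivity), ← ENNReal.rpow_mul,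
          mul_one_div_cancel hs.ne', ENNReal.rpow_one]

theorem apConst_one_le_rpow (hs : 1 ≤ s) (hw : IsWeight w) :
    ApConst 1 w ≤ ApConst 1 (fun x => w x ^ s) ^ (1 / s) := by
  refine (apConst_one_le_iff hw.2.1).2 fun Q hQ => ?_
  filter_upwards [ae_eavg_rpow_rpow_le (zero_lt_one.trans_le hs) hw hQ] with x hx
  exact (hQ.eavg_le_eavg_rpow_rpow hw.1.aemeasurable hs).trans hx

theorem rhConst_le_rpow (hs : 0 < s) (hw : IsWeight w) :
    RHConst s w ≤ ApConst 1 (fun x => w x ^ s) ^ (1 / s) :=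
  (rhConst_le_iff hw).2 fun _ hQ => hQ.le_mul_eavg_of_ae_le hw.1 (ae_eavg_rpow_rpow_le hs hw hQ)

/-- For `s > 1` and a weight `w`, `w ∈ A_1 ∩ RH_s` iff `w^s ∈ A_1`. -/
theorem statement12 (n : ℕ) (s : ℝ) (hs : 1 < s)
    (w : (Fin n → ℝ) → ℝ≥0∞) (hw : IsWeight w) :
    (MemAp 1 w ∧ MemRH s w) ↔ MemAp 1 (fun x => w x ^ s) := by
  have hs₀ : 0 < s := zero_lt_one.trans hs
  refine ⟨fun ⟨hA, hRH⟩ => ?_, fun h => ?_⟩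
  · exact (apConst_one_rpow_le hs₀ hw).trans_lt
      (ENNReal.rpow_lt_top_of_nonneg hs₀.le (ENNReal.mul_ne_top hA.ne hRH.ne))
  · have hroot : ApConst 1 (fun x => w x ^ s) ^ (1 / s) < ∞ :=
      ENNReal.rpow_lt_top_of_nonneg (by positivity) h.ne
    exact ⟨(apConst_one_le_rpow hs.le hw).trans_lt hroot, (rhConst_le_rpow hs₀ hw).trans_lt hroot⟩
end
end

section
/- If w ∈ RH_∞ and w ∈ A_∞, then for every r > 0 the weight w^r belongs to RH_∞. -/
open MeasureTheory ENNReal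
open scoped Classical

noncomputable section

variable {n : ℕ}

/-!
On a cube `Q` the `RH_∞` condition says `w ≤ C ⨍_Q w` a.e. with `C = [w]_{RH_∞}`; write `M = C ⨍_Q w`.
For `r ≥ 1`, Jensen's inequality `(⨍_Q w)^r ≤ ⨍_Q w^r` gives `w^r ≤ M^r ≤ C^r ⨍_Q w^r`.
For `r ≤ 1`, the pointwise bound `w = w^r w^{1-r} ≤ w^r M^{1-r}` averages to `⨍_Q w ≤ M^{1-r} ⨍_Q w^r`,
and multiplying by `C` and cancelling `M^{1-r}` gives `w^r ≤ M^r ≤ C ⨍_Q w^r`.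
-/

namespace ENNReal

theorem le_rpow_mul_rpow_sub_of_le {a M : ℝ≥0∞} {r : ℝ} (hr0 : 0 ≤ r) (hr1 : r ≤ 1)
    (haM : a ≤ M) : a ≤ a ^ r * M ^ (1 - r) :=
  calc a = a ^ r * a ^ (1 - r) := by
        rw [← rpow_add_of_nonneg _ _ hr0 (sub_nonneg.2 hr1), add_sub_cancel, rpow_one]
    _ ≤ a ^ r * M ^ (1 - r) := by gcongr

theorem rpow_le_mul_of_le_mul_rpow_sub {M C B : ℝ≥0∞} {r : ℝ} (hr : 0 < r) (hM : M ≠ ∞)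
    (h : M ≤ C * (M ^ (1 - r) * B)) : M ^ r ≤ C * B := by
  rcases eq_or_ne M 0 with rfl | hM0
  · simp [zero_rpow_of_pos hr]
  have hMpow0 : M ^ (1 - r) ≠ 0 := by simp [rpow_eq_zero_iff, hM0, hM]
  have hMpow : M ^ (1 - r) ≠ ∞ := by simp [rpow_eq_top_iff, hM0, hM]
  rw [← ENNReal.mul_le_mul_iff_left hMpow0 hMpow, ← rpow_add _ _ hM0 hM, add_sub_cancel,
    rpow_one]
  calc M ≤ C * (M ^ (1 - r) * B) := h
    _ = C * B * M ^ (1 - r) := by ring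

end ENNReal

namespace MeasureTheory

variable {α : Type*} [MeasurableSpace α] {μ : Measure α} {f : α → ℝ≥0∞} {r : ℝ}

theorem rpow_laverage_le_laverage_rpow [IsFiniteMeasure μ] [NeZero μ] (hf : AEMeasurable f μ)
    (hr : 1 ≤ r) : (⨍⁻ x, f x ∂μ) ^ r ≤ ⨍⁻ x, f x ^ r ∂μ := by
  set ν := (μ Set.univ)⁻¹ • μ
  have hLp : eLpNorm' f 1 ν ≤ eLpNorm' f r ν :=
    eLpNorm'_le_eLpNorm'_of_exponent_le one_pos hr ν (hf.smul_measure _).aestronglyMeasurable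
  simp only [eLpNorm', enorm_eq_self, rpow_one, div_one] at hLp
  calc (⨍⁻ x, f x ∂μ) ^ r = (∫⁻ x, f x ∂ν) ^ r := rfl
    _ ≤ ((∫⁻ x, f x ^ r ∂ν) ^ (1 / r)) ^ r := by gcongr
    _ = ⨍⁻ x, f x ^ r ∂μ := by
        rw [← rpow_mul, one_div_mul_cancel (by linarith), rpow_one]; rfl

theorem laverage_le_rpow_mul_laverage_rpow {M : ℝ≥0∞} (hf : AEMeasurable f μ) (hr0 : 0 ≤ r)
    (hr1 : r ≤ 1) (hfM : ∀ᵐ x ∂μ, f x ≤ M) :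
    ⨍⁻ x, f x ∂μ ≤ M ^ (1 - r) * ⨍⁻ x, f x ^ r ∂μ := by
  simp only [laverage_eq]
  rw [← mul_div_assoc, ← lintegral_const_mul'' _ (hf.pow_const r)]
  gcongr ?_ / _
  refine lintegral_mono_ae (hfM.mono fun x hx => ?_)
  rw [mul_comm]
  exact ENNReal.le_rpow_mul_rpow_sub_of_le hr0 hr1 hx

theorem ae_rpow_le_mul_laverage_rpow [IsFiniteMeasure μ] [NeZero μ] {C : ℝ≥0∞}
    (hf : AEMeasurable f μ) (hC : C ≠ ∞) (havg : ⨍⁻ x, f x ∂μ ≠ ∞)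
    (hfC : ∀ᵐ x ∂μ, f x ≤ C * ⨍⁻ x, f x ∂μ) (hr : 0 < r) :
    ∀ᵐ x ∂μ, f x ^ r ≤ (C ⊔ C ^ r) * ⨍⁻ x, f x ^ r ∂μ := by
  set A := ⨍⁻ x, f x ∂μ
  set B := ⨍⁻ x, f x ^ r ∂μ
  suffices hM : (C * A) ^ r ≤ (C ⊔ C ^ r) * B from
    hfC.mono fun x hx => (ENNReal.rpow_le_rpow hx hr.le).trans hM
  rcases le_total r 1 with hr1 | hr1
  · have hA : A ≤ (C * A) ^ (1 - r) * B := laverage_le_rpow_mul_laverage_rpow hf hr.le hr1 hfC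
    calc (C * A) ^ r ≤ C * B := ENNReal.rpow_le_mul_of_le_mul_rpow_sub hr
          (ENNReal.mul_ne_top hC havg) (by gcongr)
      _ ≤ (C ⊔ C ^ r) * B := by gcongr; exact le_sup_left
  · calc (C * A) ^ r = C ^ r * A ^ r := ENNReal.mul_rpow_of_nonneg _ _ hr.le
      _ ≤ C ^ r * B := by gcongr; exact rpow_laverage_le_laverage_rpow hf hr1
      _ ≤ (C ⊔ C ^ r) * B := by gcongr; exact le_sup_right

end MeasureTheory

section Cubes

variable {Q : Set (Fin n → ℝ)} {w : (Fin n → ℝ) → ℝ≥0∞}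

theorem IsCube.exists_volume_eq (hQ : IsCube Q) :
    ∃ l : ℝ, 0 < l ∧ volume Q = ENNReal.ofReal l ^ n := by
  obtain ⟨a, l, hl, rfl⟩ := hQ
  have hpi : {x : Fin n → ℝ | ∀ i, a i ≤ x i ∧ x i < a i + l} =
      Set.univ.pi fun i => Set.Ico (a i) (a i + l) := by
    ext x
    simp [Set.mem_pi]
  refine ⟨l, hl, ?_⟩
  simp [hpi, volume_pi_pi, Real.volume_Ico]

theorem IsCube.volume_ne_zero_s14 (hQ : IsCube Q) : volume Q ≠ 0 := by
  obtain ⟨l, hl, hvol⟩ := hQ.exists_volume_eq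
  simp [hvol, hl]

theorem IsCube.volume_ne_top_s14 (hQ : IsCube Q) : volume Q ≠ ∞ := by
  obtain ⟨l, -, hvol⟩ := hQ.exists_volume_eq
  simp [hvol]

theorem eavg_eq_laverage (Q : Set (Fin n → ℝ)) (f : (Fin n → ℝ) → ℝ≥0∞) :
    eavg Q f = ⨍⁻ x, f x ∂volume.restrict Q := by
  rw [eavg, setLAverage_eq]

theorem ae_le_RHInfConst_mul_eavg (hQ : IsCube Q) (hA : eavg Q w ≠ ∞) (hrh : MemRHInf w) :
    ∀ᵐ x ∂volume.restrict Q, w x ≤ RHInfConst w * eavg Q w := by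
  have hess : essSup (fun x => w x / eavg Q w) (volume.restrict Q) ≤ RHInfConst w :=
    le_iSup₂ (f := fun Q (_ : IsCube Q) => essSup (fun x => w x / eavg Q w) (volume.restrict Q))
      Q hQ
  filter_upwards [ENNReal.ae_le_essSup (f := fun x => w x / eavg Q w)] with x hx
  exact (ENNReal.div_le_iff_le_mul (Or.inr hrh.ne) (Or.inl hA)).1 (hx.trans hess)

theorem RHInfConst_rpow_le (hw : IsWeight w) (hrh : MemRHInf w) {r : ℝ} (hr : 0 < r) :
    RHInfConst (fun x => w x ^ r) ≤ RHInfConst w ⊔ RHInfConst w ^ r := by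
  refine iSup₂_le fun Q hQ => essSup_le_of_ae_le _ ?_
  have : IsFiniteMeasure (volume.restrict Q) := isFiniteMeasure_restrict.2 hQ.volume_ne_top_s14
  have : NeZero (volume.restrict Q) := ⟨by simpa using hQ.volume_ne_zero_s14⟩
  have hA : eavg Q w ≠ ∞ := (ENNReal.div_lt_top (hw.2.2 Q hQ).ne hQ.volume_ne_zero_s14).ne
  have hwA := ae_le_RHInfConst_mul_eavg hQ hA hrh
  rw [eavg_eq_laverage] at hA hwA
  filter_upwards [ae_rpow_le_mul_laverage_rpow hw.1.aemeasurable hrh.ne hA hwA hr] with x hx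
  exact ENNReal.div_le_of_le_mul (by rwa [eavg_eq_laverage])

end Cubes

theorem statement14_general (n : ℕ) (w : (Fin n → ℝ) → ℝ≥0∞) (hw : IsWeight w)
    (hrh : MemRHInf w) (r : ℝ) (hr : 0 < r) :
    MemRHInf fun x => w x ^ r :=
  (RHInfConst_rpow_le hw hrh hr).trans_lt
    (sup_lt_iff.2 ⟨hrh, ENNReal.rpow_lt_top_of_nonneg hr.le hrh.ne⟩)

/-- If `w ∈ RH_∞` and `w ∈ A_∞`, then for every `r > 0`, `w^r ∈ RH_∞`. -/
theorem statement14 (n : ℕ) (w : (Fin n → ℝ) → ℝ≥0∞) (hw : IsWeight w)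
    (hrh : MemRHInf w) (hA : ∃ p : ℝ, 1 ≤ p ∧ MemAp p w) (r : ℝ) (hr : 0 < r) :
    MemRHInf fun x => w x ^ r :=
  statement14_general n w hw hrh r hr
end
end
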